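/- Let G = (V,E) be a finite simple graph whose chromatic polynomial is χ_G. Then the coefficient of the linear term of χ_G, up to the standard sign (−1)^{|V|−1}, equals the number of acyclic orientations of G with a unique fixed source; in particular, it is zero when G is disconnected and has at least two vertices, and equals 1 when G has a single vertex. -/

import Mathlib

open SimpleGraph Polynomial

/-- Number of proper colorings of `G` with `k` colors. -/
noncomputable def properColoringCount {V : Type*} (G : SimpleGraph V) (k : ℕ) : ℕ :=
  Nat.card {f : V → Fin k // ∀ u v, G.Adj u v → f u ≠ f v}

/-- `P` is the chromatic polynomial of `G`. -/
def IsChromaticPoly {V : Type*} (G : SimpleGraph V) (P : Polynomial ℤ) : Prop :=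
  ∀ k : ℕ, P.eval (k : ℤ) = properColoringCount G k

/-- `r` is an orientation of the simple graph `G`: every directed edge lies over an
edge of `G`, and every edge of `G` gets exactly one of its two directions. -/
def IsOrientation {V : Type*} (G : SimpleGraph V) (r : V → V → Prop) : Prop :=
  (∀ u v, r u v → G.Adj u v) ∧ (∀ u v, G.Adj u v → (r u v ↔ ¬ r v u))

/-- A directed relation is acyclic if it has no directed cycles. -/
def IsAcyclicRel {V : Type*} (r : V → V → Prop) : Prop :=
  ∀ v, ¬ Relation.TransGen r v v

/-- The number of acyclic orientations of `G`. -/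
noncomputable def acyclicOrientationCount {V : Type*} (G : SimpleGraph V) : ℕ :=
  Nat.card {r : V → V → Prop // IsOrientation G r ∧ IsAcyclicRel r}

/-!
Deletion–contraction along an edge `e = v₀y` at the prescribed source. Splitting colourings of
`G ∖ e` by whether `y` and `v₀` get the same colour gives `χ_{G∖e} = χ_G + χ_{G/e}`, so
`(-1)^{n-1} a₁` is additive along `e` (the contraction has one vertex fewer). On the other side,
an acyclic orientation of `G` whose only source is `v₀` orients `e` as `v₀ → y`; deleting `e`
leaves an acyclic orientation of `G ∖ e` with source set `{v₀}` or `{v₀, y}`, and every such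
orientation arises exactly once. In the second case every edge at `v₀` or `y` points away from
them, so the orientation descends to `G/e`, bijectively onto the acyclic orientations whose only
source is the merged vertex. When `v₀` is isolated, `χ_G = X · χ_{G - v₀}` and both sides are `1`
or `0` according as `G` has one vertex or more.
-/

open Relation

universe u

lemma Nat.card_subtype_ne {V : Type*} [Finite V] (y : V) :
    Nat.card {z : V // z ≠ y} = Nat.card V - 1 := by
  classical
  have := Fintype.ofFinite V
  rw [Nat.card_eq_fintype_card, Nat.card_eq_fintype_card, Fintype.card_subtype_compl,
    Fintype.card_subtype_eq]

def IsSource {V : Type*} (r : V → V → Prop) (s : V) : Prop := ∀ u, ¬ r u s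

namespace IsAcyclicRel

variable {α β : Type*} {r : α → α → Prop}

theorem asymm (hr : IsAcyclicRel r) {a b : α} (hab : r a b) : ¬ r b a :=
  fun hba => hr a (.tail (.single hab) hba)

theorem of_map {s : β → β → Prop} (f : α → β) (hf : ∀ u v, r u v → s (f u) (f v))
    (hs : IsAcyclicRel s) : IsAcyclicRel r :=
  fun v hv => hs (f v) (TransGen.lift f hf v v hv)

theorem of_isSource {s : α → α → Prop} {a : α} (ha : IsSource r a)
    (hrs : ∀ u v, r u v → u ≠ a → s u v) (hs : IsAcyclicRel s) : IsAcyclicRel r := by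
  have ne_of_transGen {u v : α} (h : TransGen r u v) : v ≠ a := fun hv => by
    obtain ⟨c, -, hc⟩ := TransGen.tail'_iff.1 h
    exact ha c (hv ▸ hc)
  intro v hv
  suffices ∀ {w}, TransGen r v w → TransGen s v w from hs v (this hv)
  intro w h
  induction h with
  | single h => exact .single (hrs _ _ h (ne_of_transGen hv))
  | tail h hmw ih => exact ih.tail (hrs _ _ hmw (ne_of_transGen h))

theorem exists_isSource [Finite α] (hr : IsAcyclicRel r) {S : Set α} (hS : S.Nonempty)
    (hclosed : ∀ u v, r u v → v ∈ S → u ∈ S) : ∃ s ∈ S, IsSource r s := by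
  have : Std.Irrefl (TransGen r) := ⟨hr⟩
  obtain ⟨s, hs, hmin⟩ := (Finite.wellFounded_of_trans_of_irrefl (TransGen r)).has_min S hS
  exact ⟨s, hs, fun u hu => hmin u (hclosed u s hu hs) (.single hu)⟩

theorem isOrientation {V : Type*} {G : SimpleGraph V} {r : V → V → Prop} (hr : IsAcyclicRel r)
    (hadj : ∀ u v, r u v → G.Adj u v) (htot : ∀ u v, G.Adj u v → r u v ∨ r v u) :
    IsOrientation G r :=
  ⟨hadj, fun u v h => ⟨hr.asymm, (htot u v h).resolve_right⟩⟩

end IsAcyclicRel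

theorem IsOrientation.total {V : Type*} {G : SimpleGraph V} {r : V → V → Prop}
    (hr : IsOrientation G r) {u v : V} (h : G.Adj u v) : r u v ∨ r v u :=
  or_iff_not_imp_left.2 (hr.2 v u h.symm).2

namespace SimpleGraph

variable {V : Type*} {x y : V}

open Classical in
noncomputable def mergeInto (hxy : x ≠ y) (z : V) : {z : V // z ≠ y} :=
  if h : z = y then ⟨x, hxy⟩ else ⟨z, h⟩

section mergeInto
variable (hxy : x ≠ y)

@[simp] lemma mergeInto_val (a : {z : V // z ≠ y}) : mergeInto hxy a = a := dif_neg a.2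

lemma mergeInto_of_ne {z : V} (hz : z ≠ y) : mergeInto hxy z = ⟨z, hz⟩ := dif_neg hz

lemma mergeInto_eq_mk_left_iff {z : V} : mergeInto hxy z = ⟨x, hxy⟩ ↔ z = x ∨ z = y := by
  unfold mergeInto; split_ifs with h <;> simp [h]

lemma mergeInto_eq_iff_of_ne {z : V} {a : {z : V // z ≠ y}} (ha : a ≠ ⟨x, hxy⟩) :
    mergeInto hxy z = a ↔ z = a := by
  unfold mergeInto; split_ifs with h
  · subst h; exact iff_of_false (Ne.symm ha) fun h => a.2 h.symm
  · simp [Subtype.ext_iff]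

lemma deleteEdges_adj_iff_mergeInto_ne {G : SimpleGraph V} {u v : V} :
    (G.deleteEdges {s(x, y)}).Adj u v ↔ G.Adj u v ∧ mergeInto hxy u ≠ mergeInto hxy v := by
  unfold mergeInto
  rw [deleteEdges_adj]
  constructor <;> rintro ⟨h, hne⟩ <;> refine ⟨h, ?_⟩ <;> split_ifs at * <;>
    grind [Sym2.eq_swap, h.ne]

end mergeInto

def contractEdge (G : SimpleGraph V) (hxy : x ≠ y) : SimpleGraph {z : V // z ≠ y} where
  Adj := Relation.Map (G.deleteEdges {s(x, y)}).Adj (mergeInto hxy) (mergeInto hxy)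
  symm := ⟨fun _ _ ⟨u, v, h, hu, hv⟩ => ⟨v, u, h.symm, hv, hu⟩⟩
  loopless := ⟨fun _ ⟨_, _, h, hu, hv⟩ =>
    ((deleteEdges_adj_iff_mergeInto_ne hxy).1 h).2 (hu.trans hv.symm)⟩

section Colorings
variable {G : SimpleGraph V}

lemma apply_mergeInto_val {α : Type*} (hxy : x ≠ y) {f : V → α} (hf : f x = f y) (z : V) :
    f (mergeInto hxy z) = f z := by
  unfold mergeInto; split_ifs with h <;> simp [h, hf]

theorem properColoringCount_deleteEdges [Finite V] (hxy : G.Adj x y) (k : ℕ) :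
    properColoringCount (G.deleteEdges {s(x, y)}) k =
      properColoringCount (G.contractEdge hxy.ne) k + properColoringCount G k := by
  classical
  let C (W : Type _) (H : SimpleGraph W) := {f : W → Fin k // ∀ u v, H.Adj u v → f u ≠ f v}
  have merged : {f : C V (G.deleteEdges {s(x, y)}) // f.1 x = f.1 y} ≃
      C _ (G.contractEdge hxy.ne) :=
    { toFun f := ⟨fun a => f.1.1 a, by
        rintro _ _ ⟨u, v, huv, rfl, rfl⟩
        dsimp only
        rw [apply_mergeInto_val hxy.ne f.2, apply_mergeInto_val hxy.ne f.2]
        exact f.1.2 u v huv⟩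
      invFun g := ⟨⟨fun z => g.1 (mergeInto hxy.ne z),
        fun u v huv => g.2 _ _ ⟨u, v, huv, rfl, rfl⟩⟩, congrArg g.1 <|
          ((mergeInto_eq_mk_left_iff _).2 (.inl rfl)).trans
            ((mergeInto_eq_mk_left_iff _).2 (.inr rfl)).symm⟩
      left_inv f := by ext z; exact congrArg Fin.val (apply_mergeInto_val hxy.ne f.2 z)
      right_inv g := by ext a; simp }
  have separated : {f : C V (G.deleteEdges {s(x, y)}) // ¬ f.1 x = f.1 y} ≃ C V G :=
    (Equiv.subtypeSubtypeEquivSubtypeInter (fun f : V → Fin k => ∀ u v,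
      (G.deleteEdges {s(x, y)}).Adj u v → f u ≠ f v) (fun f => ¬ f x = f y)).trans <|
    Equiv.subtypeEquivRight fun f => by
      constructor
      · rintro ⟨hf, hxy'⟩ u v huv
        by_cases he : s(u, v) = s(x, y)
        · rcases Sym2.eq_iff.1 he with ⟨rfl, rfl⟩ | ⟨rfl, rfl⟩
          exacts [hxy', Ne.symm hxy']
        · exact hf u v (deleteEdges_adj.2 ⟨huv, he⟩)
      · exact fun hf => ⟨fun u v huv => hf u v (deleteEdges_adj.1 huv).1, hf x y hxy⟩
  rw [properColoringCount, ← Nat.card_congr (Equiv.sumCompl fun f : C V _ => f.1 x = f.1 y),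
    Nat.card_sum, Nat.card_congr merged, Nat.card_congr separated]
  rfl

theorem properColoringCount_induce_compl {v : V} (hv : ∀ u, ¬ G.Adj v u) (k : ℕ) :
    properColoringCount G k = k * properColoringCount (G.induce {v}ᶜ) k := by
  classical
  let e : {f : V → Fin k // ∀ u w, G.Adj u w → f u ≠ f w} ≃
      Fin k × {g : ({v}ᶜ : Set V) → Fin k // ∀ u w, (G.induce {v}ᶜ).Adj u w → g u ≠ g w} :=
    { toFun f := (f.1 v, ⟨fun u => f.1 u, fun u w h => f.2 u w h⟩)
      invFun cg := ⟨fun z => if h : z = v then cg.1 else cg.2.1 ⟨z, h⟩, fun u w h => by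
        have hu : u ≠ v := fun hu => hv w (hu ▸ h)
        have hw : w ≠ v := fun hw => hv u (hw ▸ h.symm)
        simpa [hu, hw] using cg.2.2 ⟨u, hu⟩ ⟨w, hw⟩ h⟩
      left_inv f := by ext z; by_cases h : z = v <;> simp [h]
      right_inv cg := by
        ext z
        · exact congrArg Fin.val (dif_pos rfl)
        · exact congrArg Fin.val (dif_neg z.2) }
  rw [properColoringCount, properColoringCount, Nat.card_congr e, Nat.card_prod, Nat.card_fin]

end Colorings

theorem induction_on_card_lt {motive : ∀ V : Type u, SimpleGraph V → Prop}
    (step : ∀ (V : Type u) [Finite V] (G : SimpleGraph V),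
      (∀ (W : Type u) [Finite W] (H : SimpleGraph W), Nat.card W < Nat.card V → motive W H) →
      (∀ H < G, motive V H) → motive V G)
    (V : Type u) [Finite V] (G : SimpleGraph V) : motive V G := by
  induction hV : Nat.card V using Nat.strong_induction_on generalizing V with
  | _ n ih =>
    induction G using WellFoundedLT.induction with
    | _ G ihG => exact step V G (fun W _ H hW => ih _ (hV ▸ hW) W H rfl) ihG

lemma deleteEdges_lt {G : SimpleGraph V} (hxy : G.Adj x y) :
    G.deleteEdges {s(x, y)} < G :=
  (deleteEdges_le _).lt_of_ne fun h => (deleteEdges_adj.1 (h ▸ hxy : _)).2 rfl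

end SimpleGraph

namespace IsChromaticPoly

variable {V : Type*} {G : SimpleGraph V} {P Q : ℤ[X]}

theorem unique (hP : IsChromaticPoly G P) (hQ : IsChromaticPoly G Q) : P = Q :=
  eq_of_infinite_eval_eq P Q <| Set.infinite_of_injective_forall_mem Nat.cast_injective
    fun k => by simp [hP k, hQ k]

theorem bot [Finite V] : IsChromaticPoly (⊥ : SimpleGraph V) (X ^ Nat.card V) := fun k => by
  simp [properColoringCount, Nat.card_fun]

theorem sub_contractEdge [Finite V] {x y : V} (hxy : G.Adj x y)
    (hP : IsChromaticPoly (G.deleteEdges {s(x, y)}) P)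
    (hQ : IsChromaticPoly (G.contractEdge hxy.ne) Q) : IsChromaticPoly G (P - Q) := fun k => by
  rw [eval_sub, hP k, hQ k, properColoringCount_deleteEdges hxy]
  push_cast
  ring

theorem X_mul_of_induce_compl {v : V} (hv : ∀ u, ¬ G.Adj v u)
    (hQ : IsChromaticPoly (G.induce {v}ᶜ) Q) : IsChromaticPoly G (X * Q) := fun k => by
  rw [eval_mul, eval_X, hQ k, properColoringCount_induce_compl hv]
  push_cast
  rfl

end IsChromaticPoly

theorem exists_isChromaticPoly (V : Type u) [Finite V] (G : SimpleGraph V) :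
    ∃ P, IsChromaticPoly G P := by
  induction V, G using SimpleGraph.induction_on_card_lt with
  | step V G ihCard ihLt =>
    by_cases hedge : ∃ x y, G.Adj x y
    · obtain ⟨x, y, hxy⟩ := hedge
      obtain ⟨P, hP⟩ := ihLt _ (deleteEdges_lt hxy)
      obtain ⟨Q, hQ⟩ := ihCard _ (G.contractEdge hxy.ne) <| by
        rw [Nat.card_subtype_ne]
        exact Nat.sub_lt (Finite.card_pos_iff.2 ⟨x⟩) one_pos
      exact ⟨P - Q, hP.sub_contractEdge hxy hQ⟩
    · push Not at hedge
      obtain rfl : G = ⊥ := by ext u v; simpa using hedge u v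
      exact ⟨_, .bot⟩

namespace SimpleGraph

variable {V : Type*} {G : SimpleGraph V} {x y : V}

abbrev AcyclicOrientationWithSources (G : SimpleGraph V) (S : Set V) : Type _ :=
  {r : V → V → Prop // IsOrientation G r ∧ IsAcyclicRel r ∧ ∀ s, IsSource r s ↔ s ∈ S}

theorem isEmpty_acyclicOrientationWithSources [Finite V] {S : Set V} {v₀ : V}
    (hS : S.Nonempty) (hclosed : ∀ u v, G.Adj u v → v ∈ S → u ∈ S) (hv₀ : v₀ ∉ S) :
    IsEmpty (G.AcyclicOrientationWithSources {v₀}) :=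
  ⟨fun ⟨r, hr, hac, hsrc⟩ => by
    obtain ⟨s, hs, hsrc'⟩ := hac.exists_isSource hS fun u v h => hclosed u v (hr.1 u v h)
    exact hv₀ ((hsrc s).1 hsrc' ▸ hs)⟩

theorem isEmpty_acyclicOrientationWithSources_of_not_connected [Finite V] (h : ¬ G.Connected)
    (v₀ : V) : IsEmpty (G.AcyclicOrientationWithSources {v₀}) := by
  obtain ⟨u, hu⟩ : ∃ u, ¬ G.Reachable v₀ u := by
    by_contra! hr
    exact h ((connected_iff G).2 ⟨fun a b => (hr a).symm.trans (hr b), ⟨v₀⟩⟩)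
  exact isEmpty_acyclicOrientationWithSources (S := {z | G.Reachable u z}) ⟨u, .refl u⟩
    (fun a b hab hb => hb.trans hab.symm.reachable) fun hv₀ => hu hv₀.symm

theorem card_acyclicOrientationWithSources_of_subsingleton [Subsingleton V] (v₀ : V) :
    Nat.card (G.AcyclicOrientationWithSources {v₀}) = 1 := by
  have hG (u v : V) : ¬ G.Adj u v := fun h => h.ne (Subsingleton.elim u v)
  refine Nat.card_eq_one_iff_unique.2 ⟨⟨fun r r' => Subtype.ext ?_⟩, ⟨⟨fun _ _ => False, ?_⟩⟩⟩
  · funext u v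
    exact propext (iff_of_false (hG u v ∘ r.2.1.1 u v) (hG u v ∘ r'.2.1.1 u v))
  · refine ⟨⟨fun _ _ => False.elim, fun u v h => (hG u v h).elim⟩, fun v h => ?_,
      fun s => iff_of_true (fun _ => id) (Subsingleton.elim s v₀)⟩
    cases h <;> assumption

section addArrow

lemma isSource_addArrow_iff {r : V → V → Prop} {s : V} :
    IsSource (fun u v => r u v ∨ u = x ∧ v = y) s ↔ IsSource r s ∧ s ≠ y := by
  simp only [IsSource, not_or, forall_and]
  grind

lemma restrict_addArrow {r : V → V → Prop} (hr : IsOrientation (G.deleteEdges {s(x, y)}) r) :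
    (fun u v => (r u v ∨ u = x ∧ v = y) ∧ (G.deleteEdges {s(x, y)}).Adj u v) = r := by
  funext u v
  refine propext ⟨?_, fun h => ⟨.inl h, hr.1 u v h⟩⟩
  rintro ⟨h | ⟨rfl, rfl⟩, hadj⟩
  exacts [h, absurd hadj (by simp)]

def AcyclicOrientationWithSources.addArrow (hxy : G.Adj x y) {S : Set V}
    (hS : ∀ s, s ∈ S ∧ s ≠ y ↔ s = x)
    (r : (G.deleteEdges {s(x, y)}).AcyclicOrientationWithSources S) :
    G.AcyclicOrientationWithSources {x} :=
  have hsrc (s : V) : IsSource (fun u v => r.1 u v ∨ u = x ∧ v = y) s ↔ s = x := by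
    rw [isSource_addArrow_iff, r.2.2.2, hS]
  have hac : IsAcyclicRel (fun u v => r.1 u v ∨ u = x ∧ v = y) :=
    .of_isSource ((hsrc x).2 rfl) (fun _ _ h hu => h.resolve_right (hu ·.1)) r.2.2.1
  ⟨_, hac.isOrientation
    (fun u v h => h.elim (fun h => (r.2.1.1 u v h).1) fun ⟨hu, hv⟩ => hu ▸ hv ▸ hxy)
    (fun u v h => by
      by_cases he : s(u, v) = s(x, y)
      · rcases Sym2.eq_iff.1 he with ⟨rfl, rfl⟩ | ⟨rfl, rfl⟩
        exacts [.inl (.inr ⟨rfl, rfl⟩), .inr (.inr ⟨rfl, rfl⟩)]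
      · exact (r.2.1.total (deleteEdges_adj.2 ⟨h, he⟩)).imp .inl .inl),
    hac, hsrc⟩

lemma val_eq_of_addArrow_eq (hxy : G.Adj x y) {S T : Set V}
    {hS : ∀ s, s ∈ S ∧ s ≠ y ↔ s = x} {hT : ∀ s, s ∈ T ∧ s ≠ y ↔ s = x}
    {r₁ : (G.deleteEdges {s(x, y)}).AcyclicOrientationWithSources S}
    {r₂ : (G.deleteEdges {s(x, y)}).AcyclicOrientationWithSources T}
    (h : AcyclicOrientationWithSources.addArrow hxy hS r₁ =
      AcyclicOrientationWithSources.addArrow hxy hT r₂) : r₁.1 = r₂.1 := by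
  rw [← restrict_addArrow r₁.2.1, ← restrict_addArrow r₂.2.1]
  exact congrArg (fun r u v => r u v ∧ (G.deleteEdges {s(x, y)}).Adj u v) (congrArg Subtype.val h)

lemma exists_addArrow_eq (hxy : G.Adj x y) (r : G.AcyclicOrientationWithSources {x}) :
    ∃ r' : V → V → Prop, IsOrientation (G.deleteEdges {s(x, y)}) r' ∧ IsAcyclicRel r' ∧
      (∀ s ≠ y, IsSource r' s ↔ s = x) ∧ (fun u v => r' u v ∨ u = x ∧ v = y) = r.1 := by
  have hac : IsAcyclicRel fun u v => r.1 u v ∧ (G.deleteEdges {s(x, y)}).Adj u v :=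
    r.2.2.1.of_map id fun _ _ h => h.1
  refine ⟨_, hac.isOrientation (fun _ _ h => h.2)
    (fun u v h => (r.2.1.total (deleteEdges_adj.1 h).1).imp (⟨·, h⟩) (⟨·, h.symm⟩)), hac,
    fun s hs => ⟨fun h => (r.2.2.2 s).1 fun u hu =>
      h u ⟨hu, deleteEdges_adj.2 ⟨r.2.1.1 u s hu, ?_⟩⟩, fun h u hu => (r.2.2.2 s).2 h u hu.1⟩,
    funext₂ fun u v => propext ⟨?_, fun h => ?_⟩⟩
  · intro he
    rcases Sym2.eq_iff.1 he with ⟨-, h⟩ | ⟨-, h⟩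
    exacts [hs h, (r.2.2.2 x).2 rfl u (by rwa [h] at hu)]
  · rintro (h | ⟨rfl, rfl⟩)
    exacts [h.1, (r.2.1.total hxy).resolve_right ((r.2.2.2 u).2 rfl v)]
  · by_cases he : s(u, v) = s(x, y)
    · rcases Sym2.eq_iff.1 he with ⟨rfl, rfl⟩ | ⟨rfl, rfl⟩
      exacts [.inr ⟨rfl, rfl⟩, ((r.2.2.2 v).2 rfl u h).elim]
    · exact .inl ⟨h, deleteEdges_adj.2 ⟨r.2.1.1 u v h, he⟩⟩

theorem card_acyclicOrientationWithSources_eq_add [Finite V] (hxy : G.Adj x y) :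
    Nat.card (G.AcyclicOrientationWithSources {x}) =
      Nat.card ((G.deleteEdges {s(x, y)}).AcyclicOrientationWithSources {x}) +
        Nat.card ((G.deleteEdges {s(x, y)}).AcyclicOrientationWithSources {x, y}) := by
  have hS₁ (s : V) : s ∈ ({x} : Set V) ∧ s ≠ y ↔ s = x := by grind [hxy.ne]
  have hS₂ (s : V) : s ∈ ({x, y} : Set V) ∧ s ≠ y ↔ s = x := by grind [hxy.ne]
  refine (Nat.card_sum.symm.trans (Nat.card_congr (Equiv.ofBijective
    (Sum.elim (AcyclicOrientationWithSources.addArrow hxy hS₁)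
      (AcyclicOrientationWithSources.addArrow hxy hS₂)) ⟨?_, ?_⟩))).symm
  · refine .sumElim (fun _ _ h => Subtype.ext (val_eq_of_addArrow_eq hxy h))
      (fun _ _ h => Subtype.ext (val_eq_of_addArrow_eq hxy h))
      fun r₁ r₂ h => hxy.ne.symm ((r₁.2.2.2 y).1 ?_)
    rw [val_eq_of_addArrow_eq hxy h]
    exact (r₂.2.2.2 y).2 (.inr rfl)
  · intro r
    obtain ⟨r', hor, hac, hsrc, hback⟩ := exists_addArrow_eq hxy r
    by_cases hy : IsSource r' y
    · refine ⟨.inr ⟨r', hor, hac, fun s => ?_⟩, Subtype.ext hback⟩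
      by_cases hs : s = y
      · subst hs; simp [hy]
      · rw [hsrc s hs]; simp [hs]
    · refine ⟨.inl ⟨r', hor, hac, fun s => ?_⟩, Subtype.ext hback⟩
      by_cases hs : s = y
      · subst hs; simp [hy, hxy.ne.symm]
      · exact hsrc s hs

end addArrow

section contract

variable (hxy : x ≠ y)

lemma map_mergeInto_iff {r : V → V → Prop} (hr : ∀ s, IsSource r s ↔ s = x ∨ s = y)
    {a b : {z : V // z ≠ y}} :
    Relation.Map r (mergeInto hxy) (mergeInto hxy) a b ↔ ∃ u, r u b ∧ mergeInto hxy u = a := by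
  refine ⟨?_, fun ⟨u, h, hu⟩ => ⟨u, b, h, hu, mergeInto_val hxy b⟩⟩
  rintro ⟨u, v, h, hu, rfl⟩
  have hv : v ≠ y := fun hv => (hr v).2 (.inr hv) u h
  exact ⟨u, by rwa [mergeInto_of_ne hxy hv], hu⟩

lemma isSource_map_mergeInto {r : V → V → Prop} (hr : ∀ s, IsSource r s ↔ s = x ∨ s = y) :
    IsSource (Relation.Map r (mergeInto hxy) (mergeInto hxy)) ⟨x, hxy⟩ := fun a h => by
  obtain ⟨u, hu, -⟩ := (map_mergeInto_iff hxy hr).1 h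
  exact (hr x).2 (.inl rfl) u hu

lemma isAcyclicRel_map_mergeInto {r : V → V → Prop} (hr : ∀ s, IsSource r s ↔ s = x ∨ s = y)
    (hac : IsAcyclicRel r) : IsAcyclicRel (Relation.Map r (mergeInto hxy) (mergeInto hxy)) := by
  refine .of_isSource (isSource_map_mergeInto hxy hr) (s := fun a b => r a b) (fun a b h ha => ?_)
    (hac.of_map Subtype.val fun _ _ => id)
  obtain ⟨u, hu, rfl⟩ := (map_mergeInto_iff hxy hr).1 h
  rwa [(mergeInto_eq_iff_of_ne hxy ha).1 rfl] at hu

lemma isSource_map_mergeInto_iff {r : V → V → Prop} (hr : ∀ s, IsSource r s ↔ s = x ∨ s = y)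
    {a : {z : V // z ≠ y}} :
    IsSource (Relation.Map r (mergeInto hxy) (mergeInto hxy)) a ↔ a = ⟨x, hxy⟩ := by
  refine ⟨fun ha => by_contra fun hne => ?_, fun ha => ha ▸ isSource_map_mergeInto hxy hr⟩
  obtain ⟨u, hu⟩ : ∃ u, r u a := not_forall_not.1 fun h =>
    ((hr a).1 h).elim (fun h => hne (Subtype.ext h)) a.2
  exact ha _ ((map_mergeInto_iff hxy hr).2 ⟨u, hu, rfl⟩)

def AcyclicOrientationWithSources.contract
    (r : (G.deleteEdges {s(x, y)}).AcyclicOrientationWithSources {x, y}) :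
    (G.contractEdge hxy).AcyclicOrientationWithSources {⟨x, hxy⟩} :=
  have hac := isAcyclicRel_map_mergeInto hxy r.2.2.2 r.2.2.1
  ⟨_, hac.isOrientation (fun _ _ ⟨u, v, h, hu, hv⟩ => ⟨u, v, r.2.1.1 u v h, hu, hv⟩)
    (fun _ _ ⟨u, v, h, hu, hv⟩ => (r.2.1.total h).imp (⟨u, v, ·, hu, hv⟩) (⟨v, u, ·, hv, hu⟩)),
    hac, fun _ => isSource_map_mergeInto_iff hxy r.2.2.2⟩

def AcyclicOrientationWithSources.uncontract
    (o : (G.contractEdge hxy).AcyclicOrientationWithSources {⟨x, hxy⟩}) :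
    (G.deleteEdges {s(x, y)}).AcyclicOrientationWithSources {x, y} :=
  have hac : IsAcyclicRel fun u v =>
      (G.deleteEdges {s(x, y)}).Adj u v ∧ o.1 (mergeInto hxy u) (mergeInto hxy v) :=
    o.2.2.1.of_map _ fun _ _ h => h.2
  ⟨_, hac.isOrientation (fun _ _ h => h.1)
    (fun u v h => (o.2.1.total ⟨u, v, h, rfl, rfl⟩).imp (⟨h, ·⟩) (⟨h.symm, ·⟩)),
    hac, fun s => by
      refine ⟨fun hs => by_contra fun hne => ?_,
        fun hs u hu => (o.2.2.2 _).2 ((mergeInto_eq_mk_left_iff hxy).2 hs) _ hu.2⟩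
      · have hps : mergeInto hxy s ≠ ⟨x, hxy⟩ := (hne <| (mergeInto_eq_mk_left_iff hxy).1 ·)
        obtain ⟨b, hb⟩ : ∃ b, o.1 b (mergeInto hxy s) :=
          not_forall_not.1 fun h => hps ((o.2.2.2 _).1 h)
        obtain ⟨u, v, huv, rfl, hv⟩ := o.2.1.1 _ _ hb
        obtain rfl : v = s := by
          rw [mergeInto_eq_iff_of_ne hxy hps, mergeInto_of_ne hxy ((hne <| .inr ·))] at hv
          exact hv
        exact hs u ⟨huv, hb⟩⟩

theorem card_acyclicOrientationWithSources_contractEdge :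
    Nat.card ((G.deleteEdges {s(x, y)}).AcyclicOrientationWithSources {x, y}) =
      Nat.card ((G.contractEdge hxy).AcyclicOrientationWithSources {⟨x, hxy⟩}) := by
  refine Nat.card_congr
    { toFun := AcyclicOrientationWithSources.contract hxy
      invFun := AcyclicOrientationWithSources.uncontract hxy
      left_inv r := Subtype.ext <| funext₂ fun u v => propext ?_
      right_inv o := Subtype.ext <| funext₂ fun a b => propext ?_ }
  · refine ⟨fun ⟨huv, h⟩ => (r.2.1.total huv).resolve_right fun hvu => ?_,
      fun h => ⟨r.2.1.1 u v h, u, v, h, rfl, rfl⟩⟩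
    exact (isAcyclicRel_map_mergeInto hxy r.2.2.2 r.2.2.1).asymm h ⟨v, u, hvu, rfl, rfl⟩
  · refine ⟨fun ⟨u, v, ⟨_, h⟩, hu, hv⟩ => hu ▸ hv ▸ h, fun h => ?_⟩
    obtain ⟨u, v, huv, rfl, rfl⟩ := o.2.1.1 a b h
    exact ⟨u, v, ⟨huv, h⟩, rfl, rfl⟩

end contract

end SimpleGraph

theorem IsChromaticPoly.neg_one_pow_mul_coeff_one_of_isolated {V : Type u} [Finite V]
    {G : SimpleGraph V} {P : ℤ[X]} (hP : IsChromaticPoly G P) {v₀ : V} (hv₀ : ∀ u, ¬ G.Adj v₀ u) :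
    (-1) ^ (Nat.card V - 1) * P.coeff 1 = Nat.card (G.AcyclicOrientationWithSources {v₀}) := by
  obtain ⟨Q, hQ⟩ := exists_isChromaticPoly _ (G.induce {v₀}ᶜ)
  rw [hP.unique (hQ.X_mul_of_induce_compl hv₀), coeff_X_mul, coeff_zero_eq_eval_zero,
    ← Nat.cast_zero (R := ℤ), hQ 0]
  rcases subsingleton_or_nontrivial V with hV | hV
  · have : IsEmpty ({v₀}ᶜ : Set V) := ⟨fun u => u.2 (Subsingleton.elim _ _)⟩
    rw [card_acyclicOrientationWithSources_of_subsingleton,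
      Nat.card_eq_one_iff_unique.2 ⟨hV, ⟨v₀⟩⟩]
    simp [properColoringCount]
  · obtain ⟨u, hu⟩ := exists_ne v₀
    have := isEmpty_acyclicOrientationWithSources (G := G) (S := {v₀}ᶜ) ⟨u, hu⟩
      (fun a b hab _ ha => hv₀ b (ha ▸ hab)) (· rfl)
    have : Nonempty ({v₀}ᶜ : Set V) := ⟨⟨u, hu⟩⟩
    simp [properColoringCount]

theorem IsChromaticPoly.neg_one_pow_mul_coeff_one {V : Type u} [Finite V] {G : SimpleGraph V}
    {P : ℤ[X]} (hP : IsChromaticPoly G P) (v₀ : V) :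
    (-1) ^ (Nat.card V - 1) * P.coeff 1 = Nat.card (G.AcyclicOrientationWithSources {v₀}) := by
  induction V, G using SimpleGraph.induction_on_card_lt generalizing P with
  | step V G ihCard ihLt =>
    by_cases hv₀ : ∃ y, G.Adj v₀ y
    · obtain ⟨y, hy⟩ := hv₀
      obtain ⟨Q, hQ⟩ := exists_isChromaticPoly V (G.deleteEdges {s(v₀, y)})
      obtain ⟨R, hR⟩ := exists_isChromaticPoly _ (G.contractEdge hy.ne)
      have hcard : Nat.card {z : V // z ≠ y} = Nat.card V - 1 := Nat.card_subtype_ne y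
      obtain ⟨m, hm⟩ : ∃ m, Nat.card V - 1 = m + 1 := by
        have := Finite.one_lt_card_iff_nontrivial.2 ⟨v₀, y, hy.ne⟩
        exact ⟨Nat.card V - 2, by omega⟩
      have ihQ := ihLt _ (deleteEdges_lt hy) hQ v₀
      have ihR := ihCard _ _ (by omega) hR ⟨v₀, hy.ne⟩
      rw [hcard, hm, Nat.add_sub_cancel] at ihR
      rw [hP.unique (hQ.sub_contractEdge hy hR), card_acyclicOrientationWithSources_eq_add hy,
        card_acyclicOrientationWithSources_contractEdge hy.ne, Nat.cast_add, ← ihQ, ← ihR, hm,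
        coeff_sub, pow_succ]
      ring
    · push Not at hv₀
      exact hP.neg_one_pow_mul_coeff_one_of_isolated hv₀

/-- Greene–Zaslavsky: up to the sign `(-1)^{|V|-1}`, the linear coefficient of `χ_G`
counts acyclic orientations whose unique source is a fixed chosen vertex; it vanishes for
disconnected graphs with at least two vertices and equals `1` for a one-vertex graph. -/
theorem linear_coeff_chromatic {V : Type*} [Fintype V] (G : SimpleGraph V)
    (P : Polynomial ℤ) (hP : IsChromaticPoly G P) :
    (∀ v₀ : V, (-1 : ℤ) ^ (Fintype.card V - 1) * P.coeff 1 =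
      Nat.card {r : V → V → Prop // IsOrientation G r ∧ IsAcyclicRel r ∧
        ∀ s, (∀ u, ¬ r u s) ↔ s = v₀}) ∧
    (¬ G.Connected → 2 ≤ Fintype.card V → P.coeff 1 = 0) ∧
    (Fintype.card V = 1 → P.coeff 1 = 1) := by
  have key (v₀ : V) := Nat.card_eq_fintype_card (α := V) ▸ hP.neg_one_pow_mul_coeff_one v₀
  refine ⟨key, fun hconn hcard => ?_, fun hcard => ?_⟩
  · obtain ⟨v₀⟩ : Nonempty V := Fintype.card_pos_iff.1 (by omega)
    have := isEmpty_acyclicOrientationWithSources_of_not_connected hconn v₀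
    simpa using key v₀
  · obtain ⟨v₀⟩ : Nonempty V := Fintype.card_pos_iff.1 (by omega)
    have : Subsingleton V := Fintype.card_le_one_iff_subsingleton.1 hcard.le
    simpa [hcard, card_acyclicOrientationWithSources_of_subsingleton] using key v₀
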